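/- Let α ∈ ℝ and suppose (x,p,u) : (−∞, s] → ℝⁿ × ℝⁿ × ℝ is C¹ and satisfies, for all t ≤ s, x'(t) = ∂_p H(x(t),p(t),t), p'(t) = −∂_x H(x(t),p(t),t) − f(t) p(t), and u'(t) = ⟨∂_p H(x(t),p(t),t), p(t)⟩ − H(x(t),p(t),t) + α − f(t) u(t). If u(s) ≤ u_α⁻(x(s), s) and liminf_{t→−∞} e^{F(t)} |u(t)| = 0, then u(s) = u_α⁻(x(s), s) and the curve x(·) is a backward calibrated curve of u_α⁻ ending at (x(s), s). -/

import Mathlib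

open MeasureTheory Real Filter
open scoped RealInnerProductSpace

noncomputable section

/-- `ℝⁿ` with the Euclidean norm. -/
abbrev Evec (n : ℕ) : Type := EuclideanSpace ℝ (Fin n)

/-- The vector of `Evec n` with integer coordinates `k`. -/
def intVec {n : ℕ} (k : Fin n → ℤ) : Evec n := WithLp.toLp 2 (fun i => (k i : ℝ))

/-- `γ` is absolutely continuous on the interval `S` with derivative `γ'`:
on any subinterval of `S` it is the indefinite integral of the locally
integrable function `γ'`. -/
def ACOn {n : ℕ} (γ γ' : ℝ → Evec n) (S : Set ℝ) : Prop :=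
  ∀ a ∈ S, ∀ b ∈ S,
    IntervalIntegrable γ' MeasureTheory.volume a b ∧ γ b = γ a + ∫ τ in a..b, γ' τ

/-- The set of (finite) actions `∫_{-∞}^t e^{F(s)-F(t)} (L + α)` of admissible
absolutely continuous curves `γ : (-∞, t] → ℝⁿ` with `γ t = x`. -/
def wkSet {n : ℕ} (F : ℝ → ℝ) (L : Evec n → Evec n → ℝ → ℝ) (α : ℝ)
    (x : Evec n) (t : ℝ) : Set ℝ :=
  { r | ∃ γ γ' : ℝ → Evec n, ACOn γ γ' (Set.Iic t) ∧ γ t = x ∧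
      MeasureTheory.IntegrableOn
        (fun s => Real.exp (F s - F t) * (L (γ s) (γ' s) s + α)) (Set.Iic t) ∧
      r = ∫ s in Set.Iic t, Real.exp (F s - F t) * (L (γ s) (γ' s) s + α) }

/-- The weak KAM solution `u_α⁻(x,t)`. -/
def uWK {n : ℕ} (F : ℝ → ℝ) (L : Evec n → Evec n → ℝ → ℝ) (α : ℝ)
    (x : Evec n) (t : ℝ) : ℝ :=
  sInf (wkSet F L α x t)

/-- The conjugate Tonelli Hamiltonian `H(x,p,t) = sup_v (⟨p,v⟩ - L(x,v,t))`. -/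
def Ham {n : ℕ} (L : Evec n → Evec n → ℝ → ℝ) (x p : Evec n) (t : ℝ) : ℝ :=
  ⨆ v : Evec n, (⟪p, v⟫ - L x v t)


/-!
Legendre duality identifies `∂ₚH(x, p, t)` with the unique maximiser `v` of `⟪p, v⟫ - L(x, v, t)`,
which depends continuously on `(x, p, t)`. Along the flow this turns the equations into
`x' = v` and `(e^F u)' = e^F (L(x, x', t) + α)`. Since `[f] > 0`, `e^F` is integrable at `-∞`,
and `L` is bounded below; integrating along times `tₖ → -∞` with `e^{F(tₖ)} u(tₖ) → 0` shows
that `u(t)` is the discounted action of `x` on `(-∞, t]`, so `u_α⁻ ≤ u` along `x`. Conversely,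
concatenating any competitor ending at `(x(t), t)` with `x` on `[t, s]` and using
`u(s) ≤ u_α⁻(x(s), s)` gives `u(t) ≤ u_α⁻(x(t), t)`. Once `u = u_α⁻` along `x`, calibration is
the fundamental theorem of calculus for `e^F u`.
-/

open Set Topology

theorem strictConvexOn_univ_of_iteratedFDeriv_two_pos {E : Type*} [NormedAddCommGroup E]
    [NormedSpace ℝ E] {g : E → ℝ} (hg : ContDiff ℝ 2 g)
    (hpos : ∀ v w, w ≠ 0 → 0 < iteratedFDeriv ℝ 2 g v ![w, w]) :
    StrictConvexOn ℝ univ g := by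
  refine ⟨convex_univ, fun x _ y _ hxy a b ha hb hab => ?_⟩
  set w := y - x
  have hline : ∀ r : ℝ, HasDerivAt (fun r : ℝ => x + r • w) w r := fun r => by
    simpa using ((hasDerivAt_id r).smul_const w).const_add x
  have hderiv : deriv (fun r : ℝ => g (x + r • w)) = fun r => fderiv ℝ g (x + r • w) w :=
    funext fun r =>
      ((hg.differentiable two_ne_zero).differentiableAt.hasFDerivAt.comp_hasDerivAt r
        (hline r)).deriv
  have hderiv2 : ∀ r : ℝ, HasDerivAt (deriv fun r : ℝ => g (x + r • w))
      (iteratedFDeriv ℝ 2 g (x + r • w) ![w, w]) r := fun r => by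
    rw [hderiv, iteratedFDeriv_two_apply]
    have hD := ((hg.fderiv_right one_add_one_eq_two.le).differentiable one_ne_zero).differentiableAt
      (x := x + r • w)
    exact ((ContinuousLinearMap.apply ℝ ℝ w).hasFDerivAt.comp _ hD.hasFDerivAt).comp_hasDerivAt r
      (hline r)
  have hline_conv : StrictConvexOn ℝ univ fun r : ℝ => g (x + r • w) :=
    strictConvexOn_of_deriv2_pos' convex_univ
      (hg.continuous.comp (continuous_const.add (continuous_id.smul continuous_const))).continuousOn
      fun r _ => by
        rw [Function.iterate_succ_apply', Function.iterate_one, (hderiv2 r).deriv]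
        exact hpos _ _ (sub_ne_zero.2 hxy.symm)
  obtain rfl : a = 1 - b := by linarith
  convert hline_conv.2 (mem_univ 0) (mem_univ 1) zero_ne_one ha hb hab using 2
  · simp only [w]; module
  · simp
  · simp [w]

/-- Berge's maximum theorem for a unique maximiser. -/
theorem continuousAt_of_forall_le_of_unique {Z E : Type*} [TopologicalSpace Z]
    [TopologicalSpace E] {φ : Z → E → ℝ} (hφ : Continuous (Function.uncurry φ)) {g : Z → E}
    (hmax : ∀ z w, φ z w ≤ φ z (g z)) {z₀ : Z}
    (huniq : ∀ v, (∀ w, φ z₀ w ≤ φ z₀ v) → v = g z₀) {K : Set E} (hK : IsCompact K)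
    (hgK : ∀ᶠ z in 𝓝 z₀, g z ∈ K) : ContinuousAt g z₀ := by
  refine hK.tendsto_nhds_of_unique_mapClusterPt hgK fun a _ ha => huniq a fun w => ?_
  by_contra! hlt
  have hnear : ∀ᶠ q in 𝓝 z₀ ×ˢ 𝓝 a, φ q.1 q.2 < φ q.1 w := by
    rw [← nhds_prod_eq]
    exact (hφ.tendsto (z₀, a)).eventually_lt
      ((hφ.comp (continuous_fst.prodMk continuous_const)).tendsto (z₀, a)) hlt
  obtain ⟨U, hU, W, hW, hUW⟩ := mem_prod_iff.1 hnear
  obtain ⟨z, hzW, hzU⟩ := ((ha.frequently hW).and_eventually hU).exists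
  exact (hmax z w).not_gt (@hUW (z, g z) ⟨hzU, hzW⟩)

/-- `v q` is a subgradient of `H` at every `q`; continuity of `v` at `p` squeezes the
first-order remainder between `0` and `⟪q - p, v q - v p⟫`. -/
theorem hasGradientAt_of_forall_add_inner_le {E : Type*} [NormedAddCommGroup E]
    [InnerProductSpace ℝ E] [CompleteSpace E] {H : E → ℝ} {v : E → E}
    (hsub : ∀ q r, H q + ⟪r - q, v q⟫ ≤ H r) {p : E} (hv : ContinuousAt v p) :
    HasGradientAt H (v p) p := by
  rw [hasGradientAt_iff_hasFDerivAt, hasFDerivAt_iff_isLittleO_nhds_zero,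
    Asymptotics.isLittleO_iff]
  intro c hc
  have hv' : Tendsto (fun h => v (p + h)) (𝓝 0) (𝓝 (v p)) :=
    hv.tendsto.comp ((continuous_const.add continuous_id).tendsto' 0 p (add_zero p))
  filter_upwards [hv'.eventually (Metric.closedBall_mem_nhds _ hc)] with h hh
  rw [dist_eq_norm] at hh
  have hlow := hsub p (p + h)
  have hup := hsub (p + h) p
  simp only [add_sub_cancel_left, sub_add_cancel_left, inner_neg_left] at hlow hup
  have hcs : ⟪h, v (p + h) - v p⟫ ≤ c * ‖h‖ :=
    (real_inner_le_norm _ _).trans (by rw [mul_comm]; gcongr)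
  rw [inner_sub_right] at hcs
  rw [InnerProductSpace.toDual_apply_apply, real_inner_comm, Real.norm_eq_abs, abs_le]
  constructor <;> linarith

section Legendre

variable {n : ℕ} {L : Evec n → Evec n → ℝ → ℝ}

def legendreArgmax (L : Evec n → Evec n → ℝ → ℝ) (x p : Evec n) (t : ℝ) : Evec n :=
  Classical.epsilon fun v => ∀ w, ⟪p, w⟫ - L x w t ≤ ⟪p, v⟫ - L x v t

variable (hLc : Continuous fun q : Evec n × Evec n × ℝ => L q.1 q.2.1 q.2.2)
  (hLsuper : ∀ k : ℝ, 0 ≤ k → ∃ C : ℝ, ∀ x v t, k * ‖v‖ - C ≤ L x v t)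
include hLc hLsuper

theorem exists_forall_inner_sub_le (x p : Evec n) (t : ℝ) :
    ∃ v, ∀ w, ⟪p, w⟫ - L x w t ≤ ⟪p, v⟫ - L x v t := by
  obtain ⟨C, hC⟩ := hLsuper (‖p‖ + 1) (by positivity)
  refine Continuous.exists_forall_ge ((continuous_const.inner continuous_id).sub
    (hLc.comp (continuous_const.prodMk (continuous_id.prodMk continuous_const)))) ?_
  refine tendsto_atBot_mono (fun v => ?_) (tendsto_atBot_add_const_left _ C
    (tendsto_neg_atTop_atBot.comp tendsto_norm_cocompact_atTop))
  have := hC x v t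
  simp only [Function.comp_apply]
  nlinarith [real_inner_le_norm p v]

theorem legendreArgmax_spec (x p : Evec n) (t : ℝ) (w : Evec n) :
    ⟪p, w⟫ - L x w t ≤ ⟪p, legendreArgmax L x p t⟫ - L x (legendreArgmax L x p t) t :=
  Classical.epsilon_spec (exists_forall_inner_sub_le hLc hLsuper x p t) w

theorem inner_sub_le_Ham (x p : Evec n) (t : ℝ) (v : Evec n) :
    ⟪p, v⟫ - L x v t ≤ Ham L x p t :=
  le_ciSup ⟨_, Set.forall_mem_range.2 (legendreArgmax_spec hLc hLsuper x p t)⟩ v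

theorem Ham_eq (x p : Evec n) (t : ℝ) :
    Ham L x p t = ⟪p, legendreArgmax L x p t⟫ - L x (legendreArgmax L x p t) t :=
  le_antisymm (ciSup_le (legendreArgmax_spec hLc hLsuper x p t))
    (inner_sub_le_Ham hLc hLsuper x p t _)

theorem eq_legendreArgmax_of_forall_le {x p : Evec n} {t : ℝ}
    (hLsc : StrictConvexOn ℝ univ fun v => L x v t) {v : Evec n}
    (hv : ∀ w, ⟪p, w⟫ - L x w t ≤ ⟪p, v⟫ - L x v t) : v = legendreArgmax L x p t := by
  have hconv : StrictConvexOn ℝ univ fun w => L x w t - ⟪p, w⟫ :=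
    hLsc.sub_concaveOn ((innerₛₗ ℝ p).concaveOn convex_univ)
  refine hconv.eq_of_isMinOn (fun w _ => ?_) (fun w _ => ?_) (mem_univ _) (mem_univ _)
  · have := hv w
    simp only [mem_ofPred_eq]
    linarith
  · have := legendreArgmax_spec hLc hLsuper x p t w
    simp only [mem_ofPred_eq]
    linarith

theorem exists_eventually_norm_legendreArgmax_le (z₀ : Evec n × Evec n × ℝ) :
    ∃ R, ∀ᶠ z in 𝓝 z₀, ‖legendreArgmax L z.1 z.2.1 z.2.2‖ ≤ R := by
  obtain ⟨x₀, p₀, t₀⟩ := z₀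
  obtain ⟨C, hC⟩ := hLsuper (‖p₀‖ + 2) (by positivity)
  refine ⟨C + |L x₀ 0 t₀| + 1, ?_⟩
  have hL0 : ∀ᶠ z in 𝓝 (x₀, p₀, t₀), L z.1 0 z.2.2 < |L x₀ 0 t₀| + 1 :=
    (hLc.comp (continuous_fst.prodMk (continuous_const.prodMk
      (continuous_snd.comp continuous_snd)))).continuousAt.eventually_lt continuousAt_const
      ((le_abs_self _).trans_lt (lt_add_one _))
  have hp : ∀ᶠ z in 𝓝 (x₀, p₀, t₀), ‖z.2.1‖ < ‖p₀‖ + 1 :=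
    (continuous_norm.comp (continuous_fst.comp continuous_snd)).continuousAt.eventually_lt
      continuousAt_const (lt_add_one _)
  filter_upwards [hL0, hp] with ⟨x, p, t⟩ h0 hp
  have hmax := legendreArgmax_spec hLc hLsuper x p t 0
  have := hC x (legendreArgmax L x p t) t
  simp only [inner_zero_right] at hmax h0 hp ⊢
  nlinarith [real_inner_le_norm p (legendreArgmax L x p t), norm_nonneg (legendreArgmax L x p t)]

theorem continuous_legendreArgmax (hLsc : ∀ x t, StrictConvexOn ℝ univ fun v => L x v t) :
    Continuous fun z : Evec n × Evec n × ℝ => legendreArgmax L z.1 z.2.1 z.2.2 := by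
  refine continuous_iff_continuousAt.2 fun z₀ => ?_
  obtain ⟨R, hR⟩ := exists_eventually_norm_legendreArgmax_le hLc hLsuper z₀
  refine continuousAt_of_forall_le_of_unique (φ := fun z v => ⟪z.2.1, v⟫ - L z.1 v z.2.2) ?_
    (fun z => legendreArgmax_spec hLc hLsuper _ _ _)
    (fun v hv => eq_legendreArgmax_of_forall_le hLc hLsuper (hLsc _ _) hv)
    (isCompact_closedBall 0 R) (hR.mono fun z hz => mem_closedBall_zero_iff.2 hz)
  exact ((continuous_fst.comp (continuous_snd.comp continuous_fst)).inner continuous_snd).sub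
    (hLc.comp ((continuous_fst.comp continuous_fst).prodMk
      (continuous_snd.prodMk (continuous_snd.comp (continuous_snd.comp continuous_fst)))))

theorem gradient_Ham (hLsc : ∀ x t, StrictConvexOn ℝ univ fun v => L x v t)
    (x p : Evec n) (t : ℝ) :
    gradient (fun q => Ham L x q t) p = legendreArgmax L x p t := by
  refine (hasGradientAt_of_forall_add_inner_le (H := fun q => Ham L x q t)
    (v := fun q => legendreArgmax L x q t) (fun q r => ?_) ?_).gradient
  · rw [Ham_eq hLc hLsuper x q t, inner_sub_left]
    linarith [inner_sub_le_Ham hLc hLsuper x r t (legendreArgmax L x q t)]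
  · exact ((continuous_legendreArgmax hLc hLsuper hLsc).comp
      (continuous_const.prodMk (continuous_id.prodMk continuous_const))).continuousAt

theorem inner_legendreArgmax_sub_Ham (x p : Evec n) (t : ℝ) :
    ⟪legendreArgmax L x p t, p⟫ - Ham L x p t = L x (legendreArgmax L x p t) t := by
  rw [Ham_eq hLc hLsuper, real_inner_comm]
  ring

end Legendre

theorem integrableOn_Iic_exp_primitive {f : ℝ → ℝ} (hf : Continuous f)
    (hfper : Function.Periodic f 1) (hfmean : 0 < ∫ t in (0:ℝ)..1, f t) (b : ℝ) :
    IntegrableOn (fun t => exp (∫ τ in (0:ℝ)..t, f τ)) (Iic b) := by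
  set m := ∫ t in (0:ℝ)..1, f t
  have hprim : Continuous fun t => ∫ τ in (0:ℝ)..t, f τ :=
    intervalIntegral.continuous_primitive (fun _ _ => hf.intervalIntegrable _ _) 0
  have hper : Function.Periodic (fun t => (∫ τ in (0:ℝ)..t, f τ) - m * t) 1 := fun t => by
    simp only
    rw [hfper.intervalIntegral_add_eq_add 0 t (fun _ _ => hf.intervalIntegrable _ _), zero_add]
    ring
  obtain ⟨B, hB⟩ := isBounded_iff_forall_norm_le.1
    (hper.isBounded_of_continuous one_ne_zero (hprim.sub (continuous_const_mul m)))
  refine ((integrableOn_exp_mul_Iic hfmean b).const_mul (exp B)).mono'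
    hprim.rexp.aestronglyMeasurable (ae_of_all _ fun t => ?_)
  rw [Real.norm_of_nonneg (exp_pos _).le, ← exp_add]
  have := (abs_le.1 (hB _ ⟨t, rfl⟩)).2
  exact exp_le_exp.2 (by linarith)

section AbsolutelyContinuous

variable {n : ℕ} {γ γ' η η' : ℝ → Evec n} {S : Set ℝ} {s t : ℝ}

theorem ACOn.mono {T : Set ℝ} (h : ACOn γ γ' S) (hTS : T ⊆ S) : ACOn γ γ' T :=
  fun a ha b hb => h a (hTS ha) b (hTS hb)

theorem acOn_of_le (h : ∀ a ∈ S, ∀ b ∈ S, a ≤ b →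
      IntervalIntegrable γ' volume a b ∧ γ b = γ a + ∫ τ in a..b, γ' τ) :
    ACOn γ γ' S := by
  intro a ha b hb
  rcases le_total a b with hab | hba
  · exact h a ha b hb hab
  · obtain ⟨hi, he⟩ := h b hb a ha hba
    refine ⟨hi.symm, ?_⟩
    rw [intervalIntegral.integral_symm, he]
    abel

theorem ACOn.congr_ae (h : ACOn γ γ' S) (hS : S.OrdConnected) (hγ : EqOn γ η S)
    (hγ' : ∀ᵐ τ, τ ∈ S → γ' τ = η' τ) : ACOn η η' S := by
  intro a ha b hb
  obtain ⟨hi, he⟩ := h a ha b hb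
  have hae : ∀ᵐ τ, τ ∈ uIoc a b → γ' τ = η' τ :=
    hγ'.mono fun τ hτ hab => hτ (hS.uIcc_subset ha hb (uIoc_subset_uIcc hab))
  refine ⟨hi.congr_ae ((ae_restrict_iff' measurableSet_uIoc).2 hae), ?_⟩
  rw [← hγ ha, ← hγ hb, he, intervalIntegral.integral_congr_ae hae]

theorem ACOn.Iic_union_Icc (h₁ : ACOn γ γ' (Iic t)) (h₂ : ACOn γ γ' (Icc t s)) :
    ACOn γ γ' (Iic s) := by
  refine acOn_of_le fun a _ b hb hab => ?_
  rcases le_total b t with hbt | htb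
  · exact h₁ a (hab.trans hbt) b hbt
  rcases le_total t a with hta | hat
  · exact h₂ a ⟨hta, hab.trans hb⟩ b ⟨hta.trans hab, hb⟩
  obtain ⟨i₁, e₁⟩ := h₁ a hat t self_mem_Iic
  obtain ⟨i₂, e₂⟩ := h₂ t ⟨le_rfl, htb.trans hb⟩ b ⟨htb, hb⟩
  refine ⟨i₁.trans i₂, ?_⟩
  rw [← intervalIntegral.integral_add_adjacent_intervals i₁ i₂, e₂, e₁, add_assoc]

theorem ACOn.piecewise_Iic (h₁ : ACOn γ γ' (Iic t)) (h₂ : ACOn η η' (Icc t s))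
    (hγη : γ t = η t) :
    ACOn ((Iic t).piecewise γ η) ((Iic t).piecewise γ' η') (Iic s) := by
  refine ACOn.Iic_union_Icc (t := t) ?_ ?_
  · exact h₁.congr_ae ordConnected_Iic (fun τ hτ => (piecewise_eq_of_mem _ _ _ hτ).symm)
      (ae_of_all _ fun τ hτ => (piecewise_eq_of_mem _ _ _ hτ).symm)
  · refine h₂.congr_ae ordConnected_Icc (fun τ hτ => ?_) ?_
    · rcases hτ.1.eq_or_lt with rfl | hlt
      · rw [piecewise_eq_of_mem _ _ _ self_mem_Iic, hγη]
      · exact (piecewise_eq_of_notMem _ _ _ (notMem_Iic.2 hlt)).symm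
    · filter_upwards [Measure.ae_ne volume t] with τ hτt hτ
      exact (piecewise_eq_of_notMem _ _ _ (notMem_Iic.2 (hτ.1.lt_of_ne' hτt))).symm

end AbsolutelyContinuous

section FundamentalTheorem

variable {G : Type*} [NormedAddCommGroup G] [NormedSpace ℝ G] [CompleteSpace G]
  {g g' : ℝ → G} {s : ℝ}

theorem integral_eq_sub_of_hasDerivWithinAt_Iic {a b : ℝ} (hab : a ≤ b) (hbs : b ≤ s)
    (hg : ∀ t ∈ Iic s, HasDerivWithinAt g (g' t) (Iic s) t) (hg' : ContinuousOn g' (Iic s)) :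
    ∫ τ in a..b, g' τ = g b - g a := by
  have hsub : Icc a b ⊆ Iic s := fun τ hτ => hτ.2.trans hbs
  refine intervalIntegral.integral_eq_sub_of_hasDerivAt_of_le hab
    (fun τ hτ => (hg τ (hsub hτ)).continuousWithinAt.mono hsub) (fun τ hτ => ?_)
    ((hg'.mono hsub).intervalIntegrable_of_Icc hab)
  exact (hg τ (hsub (Ioo_subset_Icc_self hτ))).hasDerivAt (Iic_mem_nhds (hτ.2.trans_le hbs))

theorem acOn_Iic_of_hasDerivWithinAt {n : ℕ} {γ γ' : ℝ → Evec n}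
    (hγ : ∀ t ∈ Iic s, HasDerivWithinAt γ (γ' t) (Iic s) t) (hγ' : ContinuousOn γ' (Iic s)) :
    ACOn γ γ' (Iic s) := by
  refine acOn_of_le fun a _ b hb hab =>
    ⟨(hγ'.mono fun τ hτ => hτ.2.trans hb).intervalIntegrable_of_Icc hab, ?_⟩
  rw [integral_eq_sub_of_hasDerivWithinAt_Iic hab hb hγ hγ']
  abel

end FundamentalTheorem

theorem integrableOn_Iic_and_integral_eq_of_hasDerivWithinAt {g g' w : ℝ → ℝ} {s : ℝ}
    (hg : ∀ t ∈ Iic s, HasDerivWithinAt g (g' t) (Iic s) t) (hg' : ContinuousOn g' (Iic s))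
    (hw : IntegrableOn w (Iic s)) (hwg' : ∀ t ∈ Iic s, -w t ≤ g' t) {T : ℕ → ℝ}
    (hT : Tendsto T atTop atBot) (hgT : Tendsto (g ∘ T) atTop (𝓝 0)) :
    IntegrableOn g' (Iic s) ∧ ∫ τ in Iic s, g' τ = g s := by
  have hTs : ∀ᶠ k in atTop, T k ≤ s := hT.eventually (eventually_le_atBot s)
  have hftc : ∀ᶠ k in atTop, ∫ τ in T k..s, g' τ = g s - g (T k) :=
    hTs.mono fun k hk => integral_eq_sub_of_hasDerivWithinAt_Iic hk le_rfl hg hg'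
  have hint : IntegrableOn g' (Iic s) := by
    refine integrableOn_Iic_of_intervalIntegral_norm_bounded
      (g s + 1 + 2 * ∫ τ in Iic s, ‖w τ‖) s
      (fun k => ((hg'.mono fun τ hτ => hτ.2).integrableOn_Icc).mono_set Ioc_subset_Icc_self) hT ?_
    filter_upwards [hTs, hftc, hgT.eventually (lt_mem_nhds (by norm_num : (-1 : ℝ) < 0))]
      with k hk hk' hgk
    have hsub : Ioc (T k) s ⊆ Iic s := fun τ hτ => hτ.2
    have hg'i : IntervalIntegrable g' volume (T k) s :=
      (hg'.mono fun τ hτ => hτ.2).intervalIntegrable_of_Icc hk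
    have hwi : IntervalIntegrable (fun τ => ‖w τ‖) volume (T k) s :=
      (intervalIntegrable_iff_integrableOn_Ioc_of_le hk).2 (IntegrableOn.mono_set hw.norm hsub)
    calc ∫ τ in T k..s, ‖g' τ‖
        ≤ ∫ τ in T k..s, (g' τ + 2 * ‖w τ‖) :=
          intervalIntegral.integral_mono_on hk hg'i.norm (hg'i.add (hwi.const_mul 2))
            fun τ hτ => by
              rw [Real.norm_eq_abs, abs_le]
              constructor <;> linarith [hwg' τ hτ.2, norm_nonneg (w τ), Real.le_norm_self (w τ)]
      _ = g s - g (T k) + 2 * ∫ τ in T k..s, ‖w τ‖ := by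
          rw [intervalIntegral.integral_add hg'i (hwi.const_mul 2), hk',
            intervalIntegral.integral_const_mul]
      _ ≤ g s + 1 + 2 * ∫ τ in Iic s, ‖w τ‖ := by
          rw [intervalIntegral.integral_of_le hk]
          have := setIntegral_mono_set hw.norm (ae_of_all _ fun τ => norm_nonneg (w τ))
            (LE.le.eventuallyLE hsub)
          simp only [Function.comp_apply] at hgk
          linarith
  refine ⟨hint, tendsto_nhds_unique (intervalIntegral_tendsto_integral_Iic s hint hT) ?_⟩
  simpa using (tendsto_const_nhds (x := g s)).sub hgT |>.congr' (hftc.mono fun k hk => hk.symm)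

theorem exists_seq_tendsto_atBot_of_forall_exists_abs_lt {G : ℝ → ℝ}
    (hG : ∀ ε : ℝ, 0 < ε → ∀ T : ℝ, ∃ t ≤ T, |G t| < ε) :
    ∃ T : ℕ → ℝ, Tendsto T atTop atBot ∧ Tendsto (G ∘ T) atTop (𝓝 0) := by
  choose T hT hGT using fun k : ℕ => hG (1 / (k + 1)) (by positivity) (-k)
  refine ⟨T, tendsto_atBot_mono hT (tendsto_neg_atTop_atBot.comp tendsto_natCast_atTop_atTop),
    squeeze_zero_norm (fun k => (hGT k).le) tendsto_one_div_add_atTop_nhds_zero_nat⟩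

theorem hasDerivWithinAt_integratingFactor {f F U : ℝ → ℝ} {S : Set ℝ} {t u' : ℝ}
    (hF : HasDerivAt F (f t) t) (hU : HasDerivWithinAt U (u' - f t * U t) S t) :
    HasDerivWithinAt (fun τ => exp (F τ) * U τ) (exp (F t) * u') S t :=
  (hF.exp.hasDerivWithinAt.mul hU).congr_deriv (by ring)

section WeakKAM

variable {n : ℕ} {F : ℝ → ℝ} {L : Evec n → Evec n → ℝ → ℝ} {α : ℝ}

def discountedLag (F : ℝ → ℝ) (L : Evec n → Evec n → ℝ → ℝ) (α : ℝ) (γ γ' : ℝ → Evec n)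
    (τ : ℝ) : ℝ :=
  exp (F τ) * (L (γ τ) (γ' τ) τ + α)

theorem ContinuousOn.discountedLag {γ γ' : ℝ → Evec n} {S : Set ℝ} (hF : Continuous F)
    (hLc : Continuous fun q : Evec n × Evec n × ℝ => L q.1 q.2.1 q.2.2)
    (hγ : ContinuousOn γ S) (hγ' : ContinuousOn γ' S) :
    ContinuousOn (discountedLag F L α γ γ') S :=
  hF.rexp.continuousOn.mul
    ((hLc.comp_continuousOn (hγ.prodMk (hγ'.prodMk continuousOn_id))).add continuousOn_const)

theorem mem_wkSet_iff {x : Evec n} {t r : ℝ} :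
    r ∈ wkSet F L α x t ↔ ∃ γ γ' : ℝ → Evec n, ACOn γ γ' (Iic t) ∧ γ t = x ∧
      IntegrableOn (discountedLag F L α γ γ') (Iic t) ∧
      exp (F t) * r = ∫ τ in Iic t, discountedLag F L α γ γ' τ := by
  have hlag : ∀ γ γ' : ℝ → Evec n, (fun τ => exp (F τ - F t) * (L (γ τ) (γ' τ) τ + α)) =
      fun τ => exp (-F t) * discountedLag F L α γ γ' τ := fun γ γ' => by
    funext τ
    rw [discountedLag, ← mul_assoc, ← exp_add, neg_add_eq_sub]
  simp only [wkSet, mem_ofPred_eq, hlag, integral_const_mul]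
  refine exists₂_congr fun γ γ' => and_congr_right' (and_congr_right' (and_congr
    (integrable_const_mul_iff (exp_pos _).ne'.isUnit _) ?_))
  rw [exp_neg, eq_inv_mul_iff_mul_eq₀ (exp_pos _).ne']

theorem bddBelow_wkSet {C : ℝ} (hL : ∀ x v t, C ≤ L x v t) (x : Evec n) (t : ℝ)
    (hexp : IntegrableOn (fun τ => exp (F τ)) (Iic t)) : BddBelow (wkSet F L α x t) := by
  refine ⟨exp (-F t) * ∫ τ in Iic t, (C + α) * exp (F τ), fun r hr => ?_⟩
  obtain ⟨γ, γ', -, -, hint, hr⟩ := mem_wkSet_iff.1 hr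
  have hmono : ∫ τ in Iic t, (C + α) * exp (F τ) ≤ ∫ τ in Iic t, discountedLag F L α γ γ' τ :=
    setIntegral_mono (hexp.const_mul _) hint fun τ => by
      rw [discountedLag, mul_comm]
      exact mul_le_mul_of_nonneg_left (by linarith [hL (γ τ) (γ' τ) τ]) (exp_pos _).le
  rw [exp_neg, inv_mul_le_iff₀ (exp_pos _), hr]
  exact hmono

theorem exists_mem_wkSet_concat {X V : ℝ → Evec n} {t s r : ℝ} (hts : t ≤ s)
    (hX : ACOn X V (Icc t s)) (hint : IntegrableOn (discountedLag F L α X V) (Ioc t s))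
    (hr : r ∈ wkSet F L α (X t) t) :
    ∃ r' ∈ wkSet F L α (X s) s,
      exp (F s) * r' = exp (F t) * r + ∫ τ in Ioc t s, discountedLag F L α X V τ := by
  obtain ⟨γ, γ', hγ, hγt, hγint, hγr⟩ := mem_wkSet_iff.1 hr
  set η := (Iic t).piecewise γ X
  set η' := (Iic t).piecewise γ' V
  have hlag₁ : EqOn (discountedLag F L α η η') (discountedLag F L α γ γ') (Iic t) :=
    fun τ hτ => by simp only [discountedLag, η, η', piecewise_eq_of_mem _ _ _ hτ]
  have hlag₂ : EqOn (discountedLag F L α η η') (discountedLag F L α X V) (Ioc t s) :=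
    fun τ hτ => by
      simp only [discountedLag, η, η', piecewise_eq_of_notMem _ _ _ (notMem_Iic.2 hτ.1)]
  have hint₁ := hγint.congr_fun hlag₁.symm measurableSet_Iic
  have hint₂ := hint.congr_fun hlag₂.symm measurableSet_Ioc
  have hηs : η s = X s := by
    rcases hts.eq_or_lt with rfl | hlt
    · simp [η, hγt]
    · exact piecewise_eq_of_notMem _ _ _ (notMem_Iic.2 hlt)
  have hsplit : ∫ τ in Iic s, discountedLag F L α η η' τ =
      exp (F t) * r + ∫ τ in Ioc t s, discountedLag F L α X V τ := by
    rw [← Iic_union_Ioc_eq_Iic hts,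
      setIntegral_union (Iic_disjoint_Ioc le_rfl) measurableSet_Ioc hint₁ hint₂,
      setIntegral_congr_fun measurableSet_Iic hlag₁, setIntegral_congr_fun measurableSet_Ioc hlag₂,
      hγr]
  have hcancel : exp (F s) * (exp (-F s) * ∫ τ in Iic s, discountedLag F L α η η' τ) =
      ∫ τ in Iic s, discountedLag F L α η η' τ := by
    rw [← mul_assoc, ← exp_add, add_neg_cancel, exp_zero, one_mul]
  refine ⟨_, mem_wkSet_iff.2 ⟨η, η', hγ.piecewise_Iic hX hγt, hηs, ?_, hcancel⟩,
    hcancel.trans hsplit⟩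
  rw [← Iic_union_Ioc_eq_Iic hts]
  exact hint₁.union hint₂

end WeakKAM

theorem uWK_eq_of_hasDerivWithinAt {n : ℕ} {F : ℝ → ℝ} {L : Evec n → Evec n → ℝ → ℝ}
    {α s C : ℝ} {X V : ℝ → Evec n} {U : ℝ → ℝ} (hF : Continuous F)
    (hexp : ∀ b, IntegrableOn (fun τ => exp (F τ)) (Iic b))
    (hLc : Continuous fun q : Evec n × Evec n × ℝ => L q.1 q.2.1 q.2.2)
    (hLlow : ∀ x v t, C ≤ L x v t)
    (hX : ∀ t ∈ Iic s, HasDerivWithinAt X (V t) (Iic s) t) (hV : ContinuousOn V (Iic s))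
    (hE : ∀ t ∈ Iic s, HasDerivWithinAt (fun τ => exp (F τ) * U τ)
      (discountedLag F L α X V t) (Iic s) t)
    (hle : U s ≤ uWK F L α (X s) s)
    (hliminf : ∀ ε : ℝ, 0 < ε → ∀ T : ℝ, ∃ t : ℝ, t ≤ T ∧ exp (F t) * |U t| < ε) :
    ∀ t ≤ s, uWK F L α (X t) t = U t := by
  have hXac : ACOn X V (Iic s) := acOn_Iic_of_hasDerivWithinAt hX hV
  have hlag : ContinuousOn (discountedLag F L α X V) (Iic s) :=
    .discountedLag hF hLc (fun t ht => (hX t ht).continuousWithinAt) hV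
  obtain ⟨T, hT, hET⟩ := exists_seq_tendsto_atBot_of_forall_exists_abs_lt
    (G := fun τ => exp (F τ) * U τ) fun ε hε T' => by
      simpa [abs_mul, abs_exp] using hliminf ε hε T'
  have hint : ∀ t ≤ s, IntegrableOn (discountedLag F L α X V) (Iic t) ∧
      ∫ τ in Iic t, discountedLag F L α X V τ = exp (F t) * U t := fun t ht =>
    integrableOn_Iic_and_integral_eq_of_hasDerivWithinAt
      (fun τ hτ => (hE τ (mem_Iic.2 (hτ.trans ht))).mono (Iic_subset_Iic.2 ht))
      (hlag.mono (Iic_subset_Iic.2 ht)) ((hexp t).const_mul (-(C + α)))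
      (fun τ _ => by
        rw [discountedLag, neg_mul, neg_neg, mul_comm]
        exact mul_le_mul_of_nonneg_left (by linarith [hLlow (X τ) (V τ) τ]) (exp_pos _).le)
      hT hET
  have hmem : ∀ t ≤ s, U t ∈ wkSet F L α (X t) t := fun t ht =>
    mem_wkSet_iff.2 ⟨X, V, hXac.mono (Iic_subset_Iic.2 ht), rfl, (hint t ht).1, (hint t ht).2.symm⟩
  have hbdd : ∀ t, BddBelow (wkSet F L α (X t) t) := fun t => bddBelow_wkSet hLlow (X t) t (hexp t)
  refine fun t ht => le_antisymm (csInf_le (hbdd t) (hmem t ht))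
    (le_csInf ⟨_, hmem t ht⟩ fun r hr => ?_)
  obtain ⟨r', hr', hr'eq⟩ := exists_mem_wkSet_concat ht (hXac.mono fun τ hτ => hτ.2)
    ((hint s le_rfl).1.mono_set Ioc_subset_Iic_self) hr
  have hftc : ∫ τ in Ioc t s, discountedLag F L α X V τ = exp (F s) * U s - exp (F t) * U t := by
    rw [← intervalIntegral.integral_of_le ht]
    exact integral_eq_sub_of_hasDerivWithinAt_Iic ht le_rfl hE hlag
  have hUs : exp (F s) * U s ≤ exp (F s) * r' :=
    mul_le_mul_of_nonneg_left (hle.trans (csInf_le (hbdd s) hr')) (exp_pos _).le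
  exact le_of_mul_le_mul_left (by linarith) (exp_pos (F t))

theorem extended_flow_below_graph_is_calibrated_general
    (n : ℕ)
    (f F : ℝ → ℝ)
    (hf : Continuous f) (hfper : ∀ t, f (t + 1) = f t)
    (hfmean : 0 < ∫ t in (0:ℝ)..1, f t)
    (hF : ∀ t, F t = ∫ τ in (0:ℝ)..t, f τ)
    (L : Evec n → Evec n → ℝ → ℝ)
    (hLsm : ContDiff ℝ 2 (fun q : Evec n × Evec n × ℝ => L q.1 q.2.1 q.2.2))
    (hLconv : ∀ (x : Evec n) (t : ℝ) (v w : Evec n), w ≠ 0 →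
      0 < iteratedFDeriv ℝ 2 (fun v' => L x v' t) v ![w, w])
    (hLsuper : ∀ k : ℝ, 0 ≤ k → ∃ C : ℝ, ∀ x v t, k * ‖v‖ - C ≤ L x v t)
    (α : ℝ) (s : ℝ) (X P : ℝ → Evec n) (U : ℝ → ℝ)
    (hX : ∀ t ∈ Set.Iic s, HasDerivWithinAt X
      (gradient (fun p => Ham L (X t) p t) (P t)) (Set.Iic s) t)
    (hP : ∀ t ∈ Set.Iic s, HasDerivWithinAt P
      (-(gradient (fun y => Ham L y (P t) t) (X t)) - f t • P t) (Set.Iic s) t)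
    (hU : ∀ t ∈ Set.Iic s, HasDerivWithinAt U
      (⟪gradient (fun p => Ham L (X t) p t) (P t), P t⟫
        - Ham L (X t) (P t) t + α - f t * U t) (Set.Iic s) t)
    (hle : U s ≤ uWK F L α (X s) s)
    (hliminf : ∀ ε : ℝ, 0 < ε → ∀ T : ℝ, ∃ t : ℝ, t ≤ T ∧ Real.exp (F t) * |U t| < ε) :
    U s = uWK F L α (X s) s ∧
    ∀ t₁ t₂ : ℝ, t₁ ≤ t₂ → t₂ ≤ s →
      Real.exp (F t₂) * uWK F L α (X t₂) t₂ - Real.exp (F t₁) * uWK F L α (X t₁) t₁ =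
        ∫ τ in t₁..t₂, Real.exp (F τ) *
          (L (X τ) (gradient (fun p => Ham L (X τ) p τ) (P τ)) τ + α) := by
  have hF' : ∀ t, HasDerivAt F (f t) t := fun t => by
    rw [funext hF]
    exact (hf.integral_hasStrictDerivAt 0 t).hasDerivAt
  have hFc : Continuous F := continuous_iff_continuousAt.2 fun t => (hF' t).continuousAt
  have hexp : ∀ b, IntegrableOn (fun τ => exp (F τ)) (Iic b) := by
    simpa only [hF] using integrableOn_Iic_exp_primitive hf hfper hfmean
  have hLc := hLsm.continuous
  have hLsc : ∀ x t, StrictConvexOn ℝ univ fun v => L x v t := fun x t =>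
    strictConvexOn_univ_of_iteratedFDeriv_two_pos
      (hLsm.comp (contDiff_const.prodMk (contDiff_id.prodMk contDiff_const))) (hLconv x t)
  simp only [gradient_Ham hLc hLsuper hLsc, inner_legendreArgmax_sub_Ham hLc hLsuper] at hX hU ⊢
  set V := fun τ => legendreArgmax L (X τ) (P τ) τ
  have hXc : ContinuousOn X (Iic s) := fun t ht => (hX t ht).continuousWithinAt
  have hPc : ContinuousOn P (Iic s) := fun t ht => (hP t ht).continuousWithinAt
  have hV : ContinuousOn V (Iic s) := (continuous_legendreArgmax hLc hLsuper hLsc).comp_continuousOn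
    (f := fun t => (X t, P t, t)) (hXc.prodMk (hPc.prodMk continuousOn_id))
  have hE : ∀ t ∈ Iic s, HasDerivWithinAt (fun τ => exp (F τ) * U τ)
      (discountedLag F L α X V t) (Iic s) t := fun t ht =>
    hasDerivWithinAt_integratingFactor (hF' t) (hU t ht)
  obtain ⟨C, hC⟩ := hLsuper 0 le_rfl
  have hueq := uWK_eq_of_hasDerivWithinAt (C := -C) hFc hexp hLc (by simpa using hC) hX hV hE
    hle hliminf
  refine ⟨(hueq s le_rfl).symm, fun t₁ t₂ h12 h2s => ?_⟩
  rw [hueq t₁ (h12.trans h2s), hueq t₂ h2s]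
  exact (integral_eq_sub_of_hasDerivWithinAt_Iic h12 h2s hE
    (.discountedLag hFc hLc hXc hV)).symm

/-- If `(x,p,u)` solves the extended dissipative Hamiltonian
system on `(-∞, s]`, with `u(s) ≤ u_α⁻(x(s), s)` and
`liminf_{t→-∞} e^{F(t)} |u(t)| = 0`, then `u(s) = u_α⁻(x(s), s)` and `x(·)` is a
backward calibrated curve of `u_α⁻` ending at `(x(s), s)`. -/
theorem extended_flow_below_graph_is_calibrated
    (n : ℕ) (hn : 1 ≤ n)
    (f F : ℝ → ℝ)
    (hf : Continuous f) (hfper : ∀ t, f (t + 1) = f t)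
    (hfmean : 0 < ∫ t in (0:ℝ)..1, f t)
    (hF : ∀ t, F t = ∫ τ in (0:ℝ)..t, f τ)
    (L : Evec n → Evec n → ℝ → ℝ)
    (hLsm : ContDiff ℝ 2 (fun q : Evec n × Evec n × ℝ => L q.1 q.2.1 q.2.2))
    (hLxper : ∀ (k : Fin n → ℤ) (x v : Evec n) (t : ℝ), L (x + intVec k) v t = L x v t)
    (hLtper : ∀ (x v : Evec n) (t : ℝ), L x v (t + 1) = L x v t)
    (hLconv : ∀ (x : Evec n) (t : ℝ) (v w : Evec n), w ≠ 0 →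
      0 < iteratedFDeriv ℝ 2 (fun v' => L x v' t) v ![w, w])
    (hLsuper : ∀ k : ℝ, 0 ≤ k → ∃ C : ℝ, ∀ x v t, k * ‖v‖ - C ≤ L x v t)
    (hcomp : ∀ (x₀ v₀ : Evec n) (t₀ : ℝ), ∃ γ : ℝ → Evec n,
      ContDiff ℝ 2 γ ∧ γ t₀ = x₀ ∧ deriv γ t₀ = v₀ ∧
      ∀ t : ℝ, HasDerivAt
        (fun σ => fderiv ℝ (fun v => L (γ σ) v σ) (deriv γ σ))
        (fderiv ℝ (fun y => L y (deriv γ t) t) (γ t)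
          - f t • fderiv ℝ (fun v => L (γ t) v t) (deriv γ t)) t)
    (α : ℝ) (s : ℝ) (X P : ℝ → Evec n) (U : ℝ → ℝ)
    (hX : ∀ t ∈ Set.Iic s, HasDerivWithinAt X
      (gradient (fun p => Ham L (X t) p t) (P t)) (Set.Iic s) t)
    (hP : ∀ t ∈ Set.Iic s, HasDerivWithinAt P
      (-(gradient (fun y => Ham L y (P t) t) (X t)) - f t • P t) (Set.Iic s) t)
    (hU : ∀ t ∈ Set.Iic s, HasDerivWithinAt U
      (⟪gradient (fun p => Ham L (X t) p t) (P t), P t⟫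
        - Ham L (X t) (P t) t + α - f t * U t) (Set.Iic s) t)
    (hle : U s ≤ uWK F L α (X s) s)
    (hliminf : ∀ ε : ℝ, 0 < ε → ∀ T : ℝ, ∃ t : ℝ, t ≤ T ∧ Real.exp (F t) * |U t| < ε) :
    U s = uWK F L α (X s) s ∧
    ∀ t₁ t₂ : ℝ, t₁ ≤ t₂ → t₂ ≤ s →
      Real.exp (F t₂) * uWK F L α (X t₂) t₂ - Real.exp (F t₁) * uWK F L α (X t₁) t₁ =
        ∫ τ in t₁..t₂, Real.exp (F τ) *
          (L (X τ) (gradient (fun p => Ham L (X τ) p τ) (P τ)) τ + α) :=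
  extended_flow_below_graph_is_calibrated_general n f F hf hfper hfmean hF L hLsm hLconv hLsuper α s
    X P U hX hP hU hle hliminf
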